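/- Let φ: ℝ^d → ℝ^n be injective linear, b ∈ ℝ^n, and suppose the lattice L = φ(ℝ^d) ∩ ℤ^n has rank d (i.e., φ(ℝ^d) is a rational subspace spanned by L). Then the quotient Λ/L of the set of nonempty-chamber labels Λ := {x ∈ ℤ^n : Δ_x ≠ ∅} by the translation action of L is finite. -/

import Mathlib

/-- The chamber `Δ_x = {a : xᵢ < φ(a)ᵢ + bᵢ < xᵢ + 1 ∀ i}`. -/
def chamber {d n : ℕ} (φ : (Fin d → ℝ) →ₗ[ℝ] (Fin n → ℝ)) (b : Fin n → ℝ)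
    (x : Fin n → ℤ) : Set (Fin d → ℝ) :=
  {a | ∀ i, (x i : ℝ) < φ a i + b i ∧ φ a i + b i < x i + 1}

/-!
Choose finitely many vectors `w₁, …, w_k ∈ L` spanning `φ(ℝᵈ)`. If `a ∈ Δ_x`, write
`φ(a) = ∑ cⱼ wⱼ`; subtracting the lattice vector `∑ ⌊cⱼ⌋ wⱼ = φ(a')` moves `a` to `a - a'`,
with `‖φ(a - a')‖ ≤ ∑ ‖wⱼ‖`, and translates the label `x` by an element of `L`. The new label
is then bounded by `∑ ‖wⱼ‖ + ‖b‖ + 1`, and there are only finitely many such integer vectors.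
-/

def Submodule.intPoints {n : ℕ} (V : Submodule ℝ (Fin n → ℝ)) : AddSubgroup (Fin n → ℝ) where
  carrier := {w | w ∈ V ∧ ∀ i, ∃ m : ℤ, w i = m}
  add_mem' := by
    rintro w w' ⟨hw, hwZ⟩ ⟨hw', hwZ'⟩
    refine ⟨V.add_mem hw hw', fun i => ?_⟩
    obtain ⟨m, hm⟩ := hwZ i
    obtain ⟨m', hm'⟩ := hwZ' i
    exact ⟨m + m', by simp [hm, hm']⟩
  zero_mem' := ⟨V.zero_mem, fun _ => ⟨0, by simp⟩⟩
  neg_mem' := by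
    rintro w ⟨hw, hwZ⟩
    refine ⟨V.neg_mem hw, fun i => ?_⟩
    obtain ⟨m, hm⟩ := hwZ i
    exact ⟨-m, by simp [hm]⟩

theorem exists_mem_norm_sub_le_of_mem_span {E : Type*} [SeminormedAddCommGroup E]
    [NormedSpace ℝ E] (A : AddSubgroup E) (T : Finset E) (hTA : ↑T ⊆ (A : Set E)) {v : E}
    (hv : v ∈ Submodule.span ℝ (T : Set E)) : ∃ z ∈ A, ‖v - z‖ ≤ ∑ w ∈ T, ‖w‖ := by
  obtain ⟨c, -, rfl⟩ := Submodule.mem_span_finset.1 hv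
  refine ⟨∑ w ∈ T, ⌊c w⌋ • w, A.sum_mem fun w hw => A.zsmul_mem (hTA hw) _, ?_⟩
  have hfract : ∑ w ∈ T, c w • w - ∑ w ∈ T, ⌊c w⌋ • w = ∑ w ∈ T, Int.fract (c w) • w := by
    rw [← Finset.sum_sub_distrib]
    refine Finset.sum_congr rfl fun w _ => ?_
    rw [Int.fract, sub_smul, Int.cast_smul_eq_zsmul]
  rw [hfract]
  refine (norm_sum_le _ _).trans (Finset.sum_le_sum fun w _ => ?_)
  rw [norm_smul, Real.norm_of_nonneg (Int.fract_nonneg _)]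
  exact mul_le_of_le_one_left (norm_nonneg w) (Int.fract_lt_one _).le

theorem Quot.finite_of_forall_exists_rel {α : Type*} {r : α → α → Prop} {s : Set α}
    (hs : s.Finite) (h : ∀ x, ∃ y ∈ s, r x y) : Finite (Quot r) := by
  have := hs.to_subtype
  refine Finite.of_surjective (fun y : s => Quot.mk r y) (Quot.ind fun x => ?_)
  obtain ⟨y, hy, hxy⟩ := h x
  exact ⟨⟨y, hy⟩, (Quot.sound hxy).symm⟩

theorem finite_setOf_norm_intCast_le (n : ℕ) (R : ℝ) :
    {y : Fin n → ℤ | ‖fun i => (y i : ℝ)‖ ≤ R}.Finite := by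
  refine (Set.finite_Icc (fun _ => -⌈R⌉) fun _ => ⌈R⌉).subset fun y hy => ?_
  have hyR : ∀ i, |y i| ≤ ⌈R⌉ := fun i => by
    have := (norm_le_pi_norm _ i).trans hy
    rw [Real.norm_eq_abs, ← Int.cast_abs] at this
    exact Int.cast_le.1 (this.trans (Int.le_ceil R))
  exact ⟨fun i => (abs_le.1 (hyR i)).1, fun i => (abs_le.1 (hyR i)).2⟩

section chamber

variable {d n : ℕ} {φ : (Fin d → ℝ) →ₗ[ℝ] (Fin n → ℝ)} {b : Fin n → ℝ} {x : Fin n → ℤ}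
  {a : Fin d → ℝ}

theorem sub_mem_chamber_sub {ℓ : Fin n → ℤ} {a' : Fin d → ℝ} (ha : a ∈ chamber φ b x)
    (ha' : φ a' = fun i => (ℓ i : ℝ)) : a - a' ∈ chamber φ b (x - ℓ) := by
  intro i
  have := ha i
  simp only [map_sub, ha', Pi.sub_apply, Int.cast_sub]
  constructor <;> linarith

theorem norm_intCast_le_of_mem_chamber (ha : a ∈ chamber φ b x) :
    ‖fun i => (x i : ℝ)‖ ≤ ‖φ a‖ + ‖b‖ + 1 := by
  refine (pi_norm_le_iff_of_nonneg (by positivity)).2 fun i => ?_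
  have hφ := norm_le_pi_norm (φ a) i
  have hb := norm_le_pi_norm b i
  have := ha i
  rw [Real.norm_eq_abs, abs_le] at hφ hb ⊢
  constructor <;> linarith

end chamber

theorem finite_chambers_mod_lattice_general {d n : ℕ}
    (φ : (Fin d → ℝ) →ₗ[ℝ] (Fin n → ℝ)) (b : Fin n → ℝ)
    (hrat : LinearMap.range φ =
      Submodule.span ℝ {w : Fin n → ℝ | w ∈ LinearMap.range φ ∧ ∀ i, ∃ m : ℤ, w i = (m : ℝ)}) :
    Finite (Quot fun x y : {x : Fin n → ℤ // (chamber φ b x).Nonempty} =>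
      ∃ ℓ : Fin n → ℤ, (fun i => (ℓ i : ℝ)) ∈ Set.range φ ∧ y.1 = x.1 + ℓ) := by
  obtain ⟨T, hTL, hT⟩ := (Submodule.fg_span_iff_fg_span_finset_subset (R := ℝ)
    ((LinearMap.range φ).intPoints : Set (Fin n → ℝ))).1 (IsNoetherian.noetherian _)
  set R := ∑ w ∈ T, ‖w‖ + ‖b‖ + 1
  refine Quot.finite_of_forall_exists_rel
    ((finite_setOf_norm_intCast_le n R).preimage Subtype.val_injective.injOn) ?_
  rintro ⟨x, a, ha⟩
  have hφa : φ a ∈ Submodule.span ℝ (T : Set (Fin n → ℝ)) := hT ▸ hrat ▸ ⟨a, rfl⟩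
  obtain ⟨_, ⟨⟨a', rfl⟩, hφa'Z⟩, hdist⟩ := exists_mem_norm_sub_le_of_mem_span _ T hTL hφa
  choose ℓ hℓ using hφa'Z
  have hmem : a - a' ∈ chamber φ b (x - ℓ) := sub_mem_chamber_sub ha (funext hℓ)
  refine ⟨⟨x - ℓ, _, hmem⟩, ?_, -ℓ, ⟨-a', ?_⟩, sub_eq_add_neg _ _⟩
  · calc _ ≤ ‖φ (a - a')‖ + ‖b‖ + 1 := norm_intCast_le_of_mem_chamber hmem
      _ ≤ R := by rw [map_sub]; linarith
  · ext i; simp [hℓ]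

/-- If `φ : ℝᵈ → ℝⁿ` is injective linear and its image is a rational subspace,
i.e. it is spanned by the lattice `L = φ(ℝᵈ) ∩ ℤⁿ` (so `L` has rank `d`), then the
quotient `Λ/L` of the set `Λ = {x ∈ ℤⁿ : Δ_x ≠ ∅}` of labels of nonempty chambers by
the translation action of `L` is finite.  This is the finiteness of the set of
chambers of the toric hyperplane arrangement `𝔄^tor`. -/
theorem finite_chambers_mod_lattice {d n : ℕ}
    (φ : (Fin d → ℝ) →ₗ[ℝ] (Fin n → ℝ)) (hφ : Function.Injective φ) (b : Fin n → ℝ)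
    (hrat : LinearMap.range φ =
      Submodule.span ℝ {w : Fin n → ℝ | w ∈ LinearMap.range φ ∧ ∀ i, ∃ m : ℤ, w i = (m : ℝ)}) :
    Finite (Quot fun x y : {x : Fin n → ℤ // (chamber φ b x).Nonempty} =>
      ∃ ℓ : Fin n → ℤ, (fun i => (ℓ i : ℝ)) ∈ Set.range φ ∧ y.1 = x.1 + ℓ) :=
  finite_chambers_mod_lattice_general φ b hrat
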